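/- arXiv:1202.3033 — 2 statements merged into one kernel-verified Lean document; each statement's English description precedes it below -/
import Mathlib

section
/- For every integer N ≥ 1 and every real t with |t| ≤ 2πN, |z_N(t) − √(4πN) · F(t/√(4πN))| ≤ |t|⁵/(10·(2πN)³). (Here the integrality of N is used through the identity exp(−i·2πN) = 1.) -/
/-- The orange-peel curve of width `1/N`: `z_N(t) = ∫_0^t exp(-i √((2πN)² - u²)) du`. -/
noncomputable def orangePeel (N : ℕ) (t : ℝ) : ℂ :=
  ∫ u in (0:ℝ)..t, Complex.exp (-Complex.I * Real.sqrt ((2 * Real.pi * N) ^ 2 - u ^ 2))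

/-- The Euler spiral `F(T) = ∫_0^T exp(i v²) dv`. -/
noncomputable def eulerSpiral (T : ℝ) : ℂ :=
  ∫ v in (0:ℝ)..T, Complex.exp (Complex.I * v ^ 2)

/-!
Multiplying the integrand of `z_N` by `exp(2πiN) = 1` turns it into `exp(i φ(u))` with phase
`φ(u) = a - √(a² - u²)`, `a = 2πN`, while rescaling the Euler spiral turns
`√(2a) F(t / √(2a))` into `∫_0^t exp(i u² / (2a)) du`. Since `u²/(2a)` is the second order Taylor
polynomial of `φ`, with `0 ≤ φ(u) - u²/(2a) ≤ u⁴/(2a³)`, and `θ ↦ exp(iθ)` is 1-Lipschitz,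
integrating the pointwise error gives `|t|⁵/(10a³)`.
-/

open Complex Set Interval

theorem Complex.norm_exp_I_mul_ofReal_sub_exp_I_mul_ofReal_le (x y : ℝ) :
    ‖exp (I * x) - exp (I * y)‖ ≤ |x - y| := by
  have hfactor : exp (I * x) - exp (I * y) = exp (I * y) * (exp (I * ↑(x - y)) - 1) := by
    rw [mul_sub, mul_one, ← Complex.exp_add]
    push_cast
    ring_nf
  rw [hfactor, norm_mul, norm_exp_I_mul_ofReal, one_mul, ← Real.norm_eq_abs]
  exact Real.norm_exp_I_mul_ofReal_sub_one_le

theorem abs_sub_sqrt_sq_sub_sq_sub_sq_div_le {a u : ℝ} (ha : 0 < a) (hu : u ^ 2 ≤ a ^ 2) :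
    |a - √(a ^ 2 - u ^ 2) - u ^ 2 / (2 * a)| ≤ u ^ 4 / (2 * a ^ 3) := by
  set s := √(a ^ 2 - u ^ 2)
  have hs : 0 ≤ s := Real.sqrt_nonneg _
  have hs_sq : s ^ 2 = a ^ 2 - u ^ 2 := Real.sq_sqrt (by linarith)
  have hs_le : s ≤ a := by nlinarith
  have hexact : a - s - u ^ 2 / (2 * a) = (a - s) ^ 2 / (2 * a) := by
    field_simp
    linear_combination -hs_sq
  -- `(a - s)(a + s) = u²` with `a + s ≥ a`
  have hgap : a - s ≤ u ^ 2 / a := by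
    rw [le_div_iff₀ ha]
    nlinarith
  rw [hexact, abs_of_nonneg (by positivity)]
  calc (a - s) ^ 2 / (2 * a) ≤ (u ^ 2 / a) ^ 2 / (2 * a) := by gcongr
    _ = u ^ 4 / (2 * a ^ 3) := by field_simp

theorem intervalIntegral.norm_integral_le_of_norm_le_mul_pow {E : Type*} [NormedAddCommGroup E]
    [NormedSpace ℝ E] {f : ℝ → E} {t C : ℝ} {n : ℕ} (h : ∀ u ∈ Ι 0 t, ‖f u‖ ≤ C * u ^ n) :
    ‖∫ u in (0:ℝ)..t, f u‖ ≤ |C| * |t| ^ (n + 1) / (n + 1) := by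
  have hbound := norm_integral_le_abs_of_norm_le (μ := MeasureTheory.volume)
    (MeasureTheory.ae_restrict_of_forall_mem measurableSet_uIoc h)
    ((continuous_const.mul (continuous_pow n)).intervalIntegrable 0 t)
  rw [integral_const_mul, integral_pow] at hbound
  refine hbound.trans_eq ?_
  rw [zero_pow n.succ_ne_zero, sub_zero, abs_mul, abs_div, abs_pow,
    abs_of_pos (n.cast_add_one_pos : (0 : ℝ) < n + 1), mul_div_assoc]

theorem orangePeel_eq_integral_exp_I_mul (N : ℕ) (t : ℝ) :
    orangePeel N t = ∫ u in (0:ℝ)..t,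
      exp (I * ↑(2 * Real.pi * N - √((2 * Real.pi * N) ^ 2 - u ^ 2))) := by
  refine intervalIntegral.integral_congr fun u _ => ?_
  have hperiod : exp (I * ↑(2 * Real.pi * N)) = 1 := by
    rw [← exp_nat_mul_two_pi_mul_I N]
    push_cast
    ring_nf
  rw [ofReal_sub, mul_sub, Complex.exp_sub, hperiod, one_div, ← Complex.exp_neg, neg_mul]

theorem ofReal_mul_eulerSpiral_div {b : ℝ} (hb : b ≠ 0) (t : ℝ) :
    (b : ℂ) * eulerSpiral (t / b) = ∫ u in (0:ℝ)..t, exp (I * ((u ^ 2 / b ^ 2 : ℝ) : ℂ)) := by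
  have hsub := intervalIntegral.integral_comp_div
    (fun v : ℝ => exp (I * (v : ℂ) ^ 2)) hb (a := 0) (b := t)
  rw [zero_div] at hsub
  rw [eulerSpiral, ← Complex.real_smul, ← hsub]
  push_cast
  simp only [div_pow]

theorem norm_integral_exp_I_mul_sub_sqrt_sub_le {a t : ℝ} (ha : 0 < a) (ht : |t| ≤ a) :
    ‖(∫ u in (0:ℝ)..t, exp (I * ↑(a - √(a ^ 2 - u ^ 2)))) -
        ∫ u in (0:ℝ)..t, exp (I * ((u ^ 2 / (2 * a) : ℝ) : ℂ))‖ ≤ |t| ^ 5 / (10 * a ^ 3) := by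
  rw [← intervalIntegral.integral_sub (by apply Continuous.intervalIntegrable; fun_prop)
    (by apply Continuous.intervalIntegrable; fun_prop)]
  have hpointwise : ∀ u ∈ Ι 0 t, ‖exp (I * ↑(a - √(a ^ 2 - u ^ 2))) -
      exp (I * ((u ^ 2 / (2 * a) : ℝ) : ℂ))‖ ≤ 1 / (2 * a ^ 3) * u ^ 4 := by
    intro u hu
    have hu_le := abs_sub_left_of_mem_uIcc (uIoc_subset_uIcc hu)
    rw [sub_zero, sub_zero] at hu_le
    have hu_sq : u ^ 2 ≤ a ^ 2 := sq_le_sq.mpr (by rw [abs_of_pos ha]; exact hu_le.trans ht)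
    calc _ ≤ _ := norm_exp_I_mul_ofReal_sub_exp_I_mul_ofReal_le _ _
      _ ≤ u ^ 4 / (2 * a ^ 3) := abs_sub_sqrt_sq_sub_sq_sub_sq_div_le ha hu_sq
      _ = 1 / (2 * a ^ 3) * u ^ 4 := by ring
  refine (intervalIntegral.norm_integral_le_of_norm_le_mul_pow hpointwise).trans_eq ?_
  rw [abs_of_pos (by positivity)]
  push_cast
  ring

/-- For every integer `N ≥ 1` and `|t| ≤ 2πN`,
`|z_N(t) − √(4πN) · F(t/√(4πN))| ≤ |t|⁵ / (10 (2πN)³)`. -/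
theorem orangePeel_close_to_eulerSpiral (N : ℕ) (hN : 1 ≤ N) (t : ℝ)
    (ht : |t| ≤ 2 * Real.pi * N) :
    ‖orangePeel N t -
        (Real.sqrt (4 * Real.pi * N) : ℂ) * eulerSpiral (t / Real.sqrt (4 * Real.pi * N))‖ ≤
      |t| ^ 5 / (10 * (2 * Real.pi * N) ^ 3) := by
  have hN_pos : (0 : ℝ) < N := by exact_mod_cast hN
  have ha : 0 < 2 * Real.pi * N := by positivity
  have hb : √(4 * Real.pi * N) ≠ 0 := by positivity
  have hb_sq : √(4 * Real.pi * N) ^ 2 = 2 * (2 * Real.pi * N) := by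
    rw [Real.sq_sqrt (by positivity)]
    ring
  rw [orangePeel_eq_integral_exp_I_mul, ofReal_mul_eulerSpiral_div hb, hb_sq]
  exact norm_integral_exp_I_mul_sub_sqrt_sub_le ha ht
end

section
/- The Euler spiral is a bounded curve: there exists a constant C > 0 such that |F(t)| ≤ C for all real t. -/
open Complex intervalIntegral

lemma norm_cexp_I_mul_sq (v : ℝ) : ‖cexp (I * v ^ 2)‖ = 1 := by
  rw [show I * (v : ℂ) ^ 2 = (v ^ 2 : ℝ) * I by push_cast; ring, norm_exp_ofReal_mul_I]

lemma continuous_cexp_I_mul_sq : Continuous fun v : ℝ ↦ cexp (I * v ^ 2) := by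
  fun_prop

lemma eulerSpiral_neg (t : ℝ) : eulerSpiral (-t) = -eulerSpiral t := by
  have h := integral_comp_neg (a := 0) (b := t) fun v : ℝ ↦ cexp (I * v ^ 2)
  simp only [ofReal_neg, neg_sq, neg_zero] at h
  rw [eulerSpiral, eulerSpiral, h, integral_symm]

lemma norm_eulerSpiral_le_abs (t : ℝ) : ‖eulerSpiral t‖ ≤ |t| := by
  simpa [eulerSpiral] using norm_integral_le_of_norm_le_const (a := 0) (b := t) (C := 1)
    fun v _ ↦ (norm_cexp_I_mul_sq v).le

lemma eulerSpiral_sub_eulerSpiral (a b : ℝ) :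
    eulerSpiral b - eulerSpiral a = ∫ v in a..b, cexp (I * v ^ 2) :=
  integral_interval_sub_left (continuous_cexp_I_mul_sq.intervalIntegrable _ _)
    (continuous_cexp_I_mul_sq.intervalIntegrable _ _)

lemma hasDerivAt_cexp_I_mul_sq_div {v : ℝ} (hv : v ≠ 0) :
    HasDerivAt (fun x : ℝ ↦ cexp (I * x ^ 2) / (2 * I * x))
      (cexp (I * v ^ 2) + cexp (I * v ^ 2) * (I / (2 * v ^ 2))) v := by
  have hexp : HasDerivAt (fun x : ℝ ↦ cexp (I * x ^ 2)) (cexp (I * v ^ 2) * (I * (2 * v))) v := by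
    simpa using (((hasDerivAt_pow 2 (v : ℂ)).const_mul I).comp_ofReal).cexp
  have hden : HasDerivAt (fun x : ℝ ↦ 2 * I * x) (2 * I) v := by
    simpa using ((hasDerivAt_id (v : ℂ)).const_mul (2 * I)).comp_ofReal
  have hv' : (v : ℂ) ≠ 0 := by exact_mod_cast hv
  refine (hexp.fun_div hden (by simp [hv'])).congr_deriv ?_
  field_simp
  linear_combination -I_sq

lemma integral_cexp_I_mul_sq_eq {a b : ℝ} (ha : 0 < a) (hb : 0 < b) :
    ∫ v in a..b, cexp (I * v ^ 2) =
      cexp (I * b ^ 2) / (2 * I * b) - cexp (I * a ^ 2) / (2 * I * a) -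
        ∫ v in a..b, cexp (I * v ^ 2) * (I / (2 * v ^ 2)) := by
  have hpos : ∀ v ∈ Set.uIcc a b, 0 < v := fun v hv ↦ (lt_min ha hb).trans_le hv.1
  have hexp := continuous_cexp_I_mul_sq.intervalIntegrable (μ := MeasureTheory.volume) a b
  have hrem : IntervalIntegrable (fun v : ℝ ↦ cexp (I * v ^ 2) * (I / (2 * v ^ 2)))
      MeasureTheory.volume a b :=
    (continuous_cexp_I_mul_sq.continuousOn.mul <| continuousOn_const.div (by fun_prop)
      fun v hv ↦ by simp [(hpos v hv).ne']).intervalIntegrable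
  rw [eq_sub_iff_add_eq, ← integral_add hexp hrem]
  exact integral_eq_sub_of_hasDerivAt
    (fun v hv ↦ hasDerivAt_cexp_I_mul_sq_div (hpos v hv).ne') (hexp.add hrem)

lemma norm_integral_cexp_I_mul_sq_le {a b : ℝ} (ha : 0 < a) (hab : a ≤ b) :
    ‖∫ v in a..b, cexp (I * v ^ 2)‖ ≤ a⁻¹ := by
  have hb := ha.trans_le hab
  have hboundary : ∀ v : ℝ, 0 < v → ‖cexp (I * v ^ 2) / (2 * I * v)‖ = (2 * v)⁻¹ := by
    intro v hv
    simp [norm_cexp_I_mul_sq, abs_of_pos hv]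
  have hzero : (0 : ℝ) ∉ Set.uIcc a b := fun h ↦ (lt_min ha hb).not_ge h.1
  have hrem : ‖∫ v in a..b, cexp (I * v ^ 2) * (I / (2 * v ^ 2))‖ ≤ (2 * a)⁻¹ - (2 * b)⁻¹ :=
    calc _ ≤ ∫ v in a..b, v ^ (-2 : ℤ) / 2 :=
          norm_integral_le_of_norm_le hab
            (.of_forall fun v _ ↦ by simp [norm_cexp_I_mul_sq, div_eq_mul_inv])
            ((intervalIntegrable_zpow (Or.inr hzero)).div_const 2)
      _ = (2 * a)⁻¹ - (2 * b)⁻¹ := by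
          rw [integral_div, integral_zpow (Or.inr ⟨by norm_num, hzero⟩)]
          simp only [show (-2 : ℤ) + 1 = -1 by norm_num, zpow_neg_one, Int.cast_neg]
          ring
  rw [integral_cexp_I_mul_sq_eq ha hb]
  calc _ ≤ ‖cexp (I * b ^ 2) / (2 * I * b)‖ + ‖cexp (I * a ^ 2) / (2 * I * a)‖ +
          ‖∫ v in a..b, cexp (I * v ^ 2) * (I / (2 * v ^ 2))‖ :=
        (norm_sub_le _ _).trans (add_le_add_left (norm_sub_le _ _) _)
    _ ≤ (2 * b)⁻¹ + (2 * a)⁻¹ + ((2 * a)⁻¹ - (2 * b)⁻¹) := by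
        rw [hboundary b hb, hboundary a ha]
        gcongr
    _ = a⁻¹ := by ring

lemma norm_eulerSpiral_le_two (t : ℝ) : ‖eulerSpiral t‖ ≤ 2 := by
  wlog ht : 0 ≤ t generalizing t
  · simpa [eulerSpiral_neg] using this (-t) (by linarith)
  rcases le_total t 1 with h1 | h1
  · exact (norm_eulerSpiral_le_abs t).trans (by rw [abs_of_nonneg ht]; linarith)
  · calc ‖eulerSpiral t‖ = ‖eulerSpiral 1 + ∫ v in 1..t, cexp (I * v ^ 2)‖ := by
          rw [← eulerSpiral_sub_eulerSpiral, add_sub_cancel]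
      _ ≤ |1| + 1⁻¹ := (norm_add_le _ _).trans
          (add_le_add (norm_eulerSpiral_le_abs 1) (norm_integral_cexp_I_mul_sq_le one_pos h1))
      _ = 2 := by norm_num

/-- The Euler spiral is a bounded curve: there is a constant `C > 0` with `|F(t)| ≤ C`
for all real `t`. -/
theorem eulerSpiral_bounded : ∃ C : ℝ, 0 < C ∧ ∀ t : ℝ, ‖eulerSpiral t‖ ≤ C :=
  ⟨2, two_pos, norm_eulerSpiral_le_two⟩
end
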